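/- arXiv:2206.08629 — 3 statements merged into one kernel-verified Lean document; each statement's English description precedes it below -/
import Mathlib

section
/- Lemma 1 (exact potential, Lemma 1 of the paper): For every agent i ∈ I, every joint strategy x = (x_j)_{j∈I}, and every alternative strategy x̃_i ∈ ℝ^{n_i}, it holds that J_i(x with i-th component replaced by x̃_i) − J_i(x) = P(x with i-th component replaced by x̃_i) − P(x); that is, P is an exact potential function for the family of cost functions (J_i)_{i∈I}. -/
/-!
A unilateral deviation of agent `i` replaces `a = Ξ i (x i)` by `b = Ξ i x̃ᵢ` and hence the
aggregate `s = σ x` by `s - a + b`. For symmetric `Q` the change `⟪b, Q (s - a + b)⟫ - ⟪a, Q s⟫`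
of the coupling term of `J i` is, by polarization, half the change of `⟪s, Q s⟫` plus half
the change from `⟪a, Q a⟫` to `⟪b, Q b⟫`, which is exactly the change of the quadratic part of `P`.
-/

open scoped RealInnerProductSpace BigOperators

theorem Fintype.sum_apply_update {ι : Type*} [Fintype ι] [DecidableEq ι] {β : ι → Type*}
    {M : Type*} [AddCommGroup M] (g : ∀ j, β j → M) (x : ∀ j, β j) (i : ι) (v : β i) :
    ∑ j, g j (Function.update x i v j) = ∑ j, g j (x j) - g i (x i) + g i v := by
  simp_rw [Function.apply_update g]
  rw [Finset.sum_update_of_mem (Finset.mem_univ i),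
    Finset.sum_eq_add_sum_sdiff_singleton_of_mem (Finset.mem_univ i) fun j => g j (x j)]
  abel

theorem LinearMap.IsSymmetric.inner_apply_sub_add {E : Type*} [NormedAddCommGroup E]
    [InnerProductSpace ℝ E] {Q : E →ₗ[ℝ] E} (hQ : Q.IsSymmetric) (s a b : E) :
    ⟪b, Q (s - a + b)⟫ - ⟪a, Q s⟫
      = (1 / 2) * (⟪s - a + b, Q (s - a + b)⟫ - ⟪s, Q s⟫)
        + (1 / 2) * (⟪b, Q b⟫ - ⟪a, Q a⟫) := by
  have hswap : ∀ u v, ⟪u, Q v⟫ = ⟪v, Q u⟫ := fun u v => by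
    rw [← hQ, real_inner_comm]
  simp only [map_add, map_sub, inner_add_left, inner_sub_left, inner_add_right, inner_sub_right]
  rw [hswap s a, hswap s b, hswap a b]
  ring

/-- Lemma 1 (exact potential): with costs
`J i x = f i (x i) + ⟪Ξ i (x i), Q (σ x)⟫` where `σ x = ∑ j, Ξ j (x j)` and `Q` symmetric,
the function `P x = ∑ i, f i (x i) + (1/2)⟪σ x, Q (σ x)⟫ + (1/2)∑ i, ⟪Ξ i (x i), Q (Ξ i (x i))⟫`
is an exact potential: unilateral deviations change `J i` and `P` by the same amount. -/
theorem exact_potential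
    {ι : Type*} [Fintype ι] [DecidableEq ι] {H : ℕ} {n : ι → ℕ}
    (Q : EuclideanSpace ℝ (Fin H) →ₗ[ℝ] EuclideanSpace ℝ (Fin H))
    (hQsym : ∀ u v : EuclideanSpace ℝ (Fin H), ⟪Q u, v⟫ = ⟪u, Q v⟫)
    (Ξ : ∀ i : ι, EuclideanSpace ℝ (Fin (n i)) →ₗ[ℝ] EuclideanSpace ℝ (Fin H))
    (f : ∀ i : ι, EuclideanSpace ℝ (Fin (n i)) → ℝ)
    (σ : (∀ i : ι, EuclideanSpace ℝ (Fin (n i))) → EuclideanSpace ℝ (Fin H))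
    (hσ : ∀ x, σ x = ∑ j : ι, Ξ j (x j))
    (J : ι → (∀ i : ι, EuclideanSpace ℝ (Fin (n i))) → ℝ)
    (hJ : ∀ i x, J i x = f i (x i) + ⟪Ξ i (x i), Q (σ x)⟫)
    (P : (∀ i : ι, EuclideanSpace ℝ (Fin (n i))) → ℝ)
    (hP : ∀ x, P x = (∑ i : ι, f i (x i)) + (1 / 2) * ⟪σ x, Q (σ x)⟫
        + (1 / 2) * ∑ i : ι, ⟪Ξ i (x i), Q (Ξ i (x i))⟫) :
    ∀ (i : ι) (x : ∀ i : ι, EuclideanSpace ℝ (Fin (n i)))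
      (xt : EuclideanSpace ℝ (Fin (n i))),
      J i (Function.update x i xt) - J i x
        = P (Function.update x i xt) - P x := by
  intro i x xt
  have hσ_update : σ (Function.update x i xt) = σ x - Ξ i (x i) + Ξ i xt := by
    rw [hσ, hσ, Fintype.sum_apply_update fun j => ⇑(Ξ j)]
  rw [hJ, hJ, hP, hP, hσ_update, Fintype.sum_apply_update f,
    Fintype.sum_apply_update fun j v => ⟪Ξ j v, Q (Ξ j v)⟫, Function.update_self]
  linear_combination LinearMap.IsSymmetric.inner_apply_sub_add hQsym (σ x) (Ξ i (x i)) (Ξ i xt)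
end

section
/- Lemma 2(i) (monotone pseudogradient): Suppose each f_i is differentiable and convex and Q is symmetric positive semidefinite. Define the pseudogradient map F by F(x) = (∇f_i(x_i) + Ξ_i^⊤ Q σ(x) + Ξ_i^⊤ Q Ξ_i x_i)_{i∈I}, where Ξ_i^⊤ denotes the adjoint of Ξ_i. Then F is a monotone operator on the product space: for all joint strategies x, y, Σ_{i∈I} ⟨F_i(x) − F_i(y), x_i − y_i⟩ ≥ 0. -/
/-!
The pairing `∑ i, ⟪F x i - F y i, x i - y i⟫` splits into three nonnegative parts: the
gradient terms, nonnegative because the gradient of a convex function is monotone; the coupling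
terms `⟪Ξᵢ* Q (σ x - σ y), x i - y i⟫`, which sum to `⟪Q (σ x - σ y), σ x - σ y⟫`; and the
diagonal terms `⟪Q Ξᵢ (x i - y i), Ξᵢ (x i - y i)⟫`. The last two are nonnegative since `Q` is
positive semidefinite.
-/

open scoped RealInnerProductSpace BigOperators

/-- Restricting `f` to the segment from `x` to `y` reduces this to the one-variable fact that a
convex function lies above its tangent line. -/
theorem ConvexOn.add_fderiv_sub_le {E : Type*} [NormedAddCommGroup E] [NormedSpace ℝ E]
    {s : Set E} {f : E → ℝ} {f' : E →L[ℝ] ℝ} {x y : E}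
    (hf : ConvexOn ℝ s f) (hx : x ∈ s) (hy : y ∈ s) (hfx : HasFDerivAt f f' x) :
    f x + f' (y - x) ≤ f y := by
  let L : ℝ →ᵃ[ℝ] E := AffineMap.lineMap x y
  have hderiv : HasDerivAt (f ∘ L) (f' (y - x)) 0 :=
    hfx.comp_hasDerivAt_of_eq (0 : ℝ) AffineMap.hasDerivAt_lineMap (by simp [L])
  have := (hf.comp_affineMap L).le_slope_of_hasDerivAt (x := 0) (y := 1) (by simpa [L] using hx)
    (by simpa [L] using hy) zero_lt_one hderiv
  simp only [slope_def_field, Function.comp_apply, L, AffineMap.lineMap_apply_zero,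
    AffineMap.lineMap_apply_one, sub_zero, div_one] at this
  linarith

theorem ConvexOn.inner_gradient_sub_nonneg {E : Type*} [NormedAddCommGroup E]
    [InnerProductSpace ℝ E] [CompleteSpace E] {s : Set E} {f : E → ℝ} {x y gx gy : E}
    (hf : ConvexOn ℝ s f) (hx : x ∈ s) (hy : y ∈ s)
    (hgx : HasGradientAt f gx x) (hgy : HasGradientAt f gy y) :
    0 ≤ ⟪gx - gy, x - y⟫ := by
  have hxy := hf.add_fderiv_sub_le hx hy hgx.hasFDerivAt
  have hyx := hf.add_fderiv_sub_le hy hx hgy.hasFDerivAt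
  simp only [InnerProductSpace.toDual_apply_apply] at hxy hyx
  have : ⟪gx - gy, x - y⟫ = -⟪gx, y - x⟫ - ⟪gy, x - y⟫ := by
    simp only [inner_sub_left, inner_sub_right]; ring
  linarith

theorem ContinuousLinearMap.sum_inner_adjoint_apply {ι : Type*} [Fintype ι] {E : ι → Type*}
    [∀ i, NormedAddCommGroup (E i)] [∀ i, InnerProductSpace ℝ (E i)] [∀ i, CompleteSpace (E i)]
    {G : Type*} [NormedAddCommGroup G] [InnerProductSpace ℝ G] [CompleteSpace G]
    (A : ∀ i, E i →L[ℝ] G) (v : G) (d : ∀ i, E i) :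
    ∑ i, ⟪(A i).adjoint v, d i⟫ = ⟪v, ∑ i, A i (d i)⟫ := by
  simp only [ContinuousLinearMap.adjoint_inner_left, inner_sum]

theorem pseudogradient_monotone_general
    {ι : Type*} [Fintype ι] {H : ℕ} {n : ι → ℕ}
    (Q : EuclideanSpace ℝ (Fin H) →L[ℝ] EuclideanSpace ℝ (Fin H))
    (hQpsd : ∀ u : EuclideanSpace ℝ (Fin H), 0 ≤ ⟪u, Q u⟫)
    (Ξ : ∀ i : ι, EuclideanSpace ℝ (Fin (n i)) →L[ℝ] EuclideanSpace ℝ (Fin H))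
    (f : ∀ i : ι, EuclideanSpace ℝ (Fin (n i)) → ℝ)
    (f' : ∀ i : ι, EuclideanSpace ℝ (Fin (n i)) → EuclideanSpace ℝ (Fin (n i)))
    (hdiff : ∀ (i : ι) (xi : EuclideanSpace ℝ (Fin (n i))), HasGradientAt (f i) (f' i xi) xi)
    (hconv : ∀ i : ι, ConvexOn ℝ Set.univ (f i))
    (σ : (∀ i : ι, EuclideanSpace ℝ (Fin (n i))) → EuclideanSpace ℝ (Fin H))
    (hσ : ∀ x, σ x = ∑ j : ι, Ξ j (x j))
    (F : (∀ i : ι, EuclideanSpace ℝ (Fin (n i))) → ∀ i : ι, EuclideanSpace ℝ (Fin (n i)))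
    (hF : ∀ x i, F x i
        = f' i (x i) + (Ξ i).adjoint (Q (σ x)) + (Ξ i).adjoint (Q (Ξ i (x i)))) :
    ∀ x y : ∀ i : ι, EuclideanSpace ℝ (Fin (n i)),
      0 ≤ ∑ i : ι, ⟪F x i - F y i, x i - y i⟫ := by
  intro x y
  have hQ (u) : 0 ≤ ⟪Q u, u⟫ := real_inner_comm (Q u) u ▸ hQpsd u
  have hσ_sub : σ x - σ y = ∑ i, Ξ i (x i - y i) := by
    simp only [hσ, map_sub, Finset.sum_sub_distrib]
  have hsplit (i) : ⟪F x i - F y i, x i - y i⟫ = ⟪f' i (x i) - f' i (y i), x i - y i⟫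
      + ⟪(Ξ i).adjoint (Q (σ x - σ y)), x i - y i⟫
      + ⟪Q (Ξ i (x i - y i)), Ξ i (x i - y i)⟫ := by
    rw [hF, hF, ← ContinuousLinearMap.adjoint_inner_left (Ξ i) (x i - y i), ← inner_add_left,
      ← inner_add_left]
    congr 1
    simp only [map_sub]
    abel
  simp only [hsplit, Finset.sum_add_distrib, ContinuousLinearMap.sum_inner_adjoint_apply, ← hσ_sub]
  refine add_nonneg (add_nonneg (Finset.sum_nonneg fun i _ => ?_) (hQ _))
    (Finset.sum_nonneg fun i _ => hQ _)
  exact (hconv i).inner_gradient_sub_nonneg trivial trivial (hdiff i _) (hdiff i _)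

/-- Lemma 2(i) (monotone pseudogradient): if each `f i` is differentiable and convex
and `Q` is symmetric positive semidefinite, then the pseudogradient map
`F x = (∇f i (x i) + Ξᵢ* Q (σ x) + Ξᵢ* Q Ξᵢ (x i))_{i}` is monotone:
`∑ i, ⟪F x i - F y i, x i - y i⟫ ≥ 0` for all joint strategies `x, y`. -/
theorem pseudogradient_monotone
    {ι : Type*} [Fintype ι] {H : ℕ} {n : ι → ℕ}
    (Q : EuclideanSpace ℝ (Fin H) →L[ℝ] EuclideanSpace ℝ (Fin H))
    (hQsym : ∀ u v : EuclideanSpace ℝ (Fin H), ⟪Q u, v⟫ = ⟪u, Q v⟫)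
    (hQpsd : ∀ u : EuclideanSpace ℝ (Fin H), 0 ≤ ⟪u, Q u⟫)
    (Ξ : ∀ i : ι, EuclideanSpace ℝ (Fin (n i)) →L[ℝ] EuclideanSpace ℝ (Fin H))
    (f : ∀ i : ι, EuclideanSpace ℝ (Fin (n i)) → ℝ)
    (f' : ∀ i : ι, EuclideanSpace ℝ (Fin (n i)) → EuclideanSpace ℝ (Fin (n i)))
    (hdiff : ∀ (i : ι) (xi : EuclideanSpace ℝ (Fin (n i))), HasGradientAt (f i) (f' i xi) xi)
    (hconv : ∀ i : ι, ConvexOn ℝ Set.univ (f i))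
    (σ : (∀ i : ι, EuclideanSpace ℝ (Fin (n i))) → EuclideanSpace ℝ (Fin H))
    (hσ : ∀ x, σ x = ∑ j : ι, Ξ j (x j))
    (F : (∀ i : ι, EuclideanSpace ℝ (Fin (n i))) → ∀ i : ι, EuclideanSpace ℝ (Fin (n i)))
    (hF : ∀ x i, F x i
        = f' i (x i) + (Ξ i).adjoint (Q (σ x)) + (Ξ i).adjoint (Q (Ξ i (x i)))) :
    ∀ x y : ∀ i : ι, EuclideanSpace ℝ (Fin (n i)),
      0 ≤ ∑ i : ι, ⟪F x i - F y i, x i - y i⟫ :=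
  pseudogradient_monotone_general Q hQpsd Ξ f f' hdiff hconv σ hσ F hF
end

section
/- Proposition 2 (existence of box-feasible pressures on a tree): Let G be a finite simple graph on vertex set V that is a tree, with a fixed orientation, let θ : E(G) → ℝ, and let ψ⁰ : V → ℝ be a particular solution, i.e., ψ⁰(h(e)) − ψ⁰(t(e)) = θ(e) for every edge e. Let lower and upper bounds lb, ub : V → ℝ be given. Then there exists ψ : V → ℝ with lb(v) ≤ ψ(v) ≤ ub(v) for all v ∈ V and ψ(h(e)) − ψ(t(e)) = θ(e) for all edges e, if and only if ψ⁰(j) − ψ⁰(k) ≤ ub(j) − lb(k) for all vertices j, k ∈ V. -/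
/-!
Two solutions of the edge-difference system differ by a function that agrees across every edge,
hence by a constant on the connected graph; so the solutions are exactly the shifts `ψ0 + c`.
Such a shift fits the box iff `c` lies between the families `lb - ψ0` and `ub - ψ0`, and a
separating constant exists iff every member of the first is below every member of the second.
-/

theorem exists_forall_le_and_forall_ge_of_forall_le {ι α : Type*}
    [ConditionallyCompleteLattice α] [Nonempty α] {f g : ι → α} (h : ∀ i j, f i ≤ g j) :
    ∃ c, (∀ i, f i ≤ c) ∧ ∀ j, c ≤ g j := by
  cases isEmpty_or_nonempty ι
  · exact ⟨Classical.arbitrary α, isEmptyElim, isEmptyElim⟩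
  · obtain ⟨c, hf, hg⟩ := exists_between_of_forall_le (Set.range_nonempty f)
      (Set.range_nonempty g) (by rintro _ ⟨i, rfl⟩ _ ⟨j, rfl⟩; exact h i j)
    exact ⟨c, fun i => hf ⟨i, rfl⟩, fun j => hg ⟨j, rfl⟩⟩

namespace SimpleGraph

variable {V α : Type*} {G : SimpleGraph V}

theorem Preconnected.apply_eq_of_forall_adj (hG : G.Preconnected) {f : V → α}
    (hf : ∀ u v, G.Adj u v → f u = f v) (u v : V) : f u = f v := by
  simpa [Relation.reflTransGen_eq_self] using
    ((G.reachable_iff_reflTransGen u v).1 (hG u v)).lift f (p := Eq) hf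

theorem apply_eq_of_adj_of_forall_edge (hd tl : G.edgeSet → V)
    (horient : ∀ e : G.edgeSet, (e : Sym2 V) = s(hd e, tl e)) {f : V → α}
    (hf : ∀ e, f (hd e) = f (tl e)) {u v : V} (huv : G.Adj u v) : f u = f v := by
  obtain ⟨e, he⟩ : ∃ e : G.edgeSet, s(u, v) = s(hd e, tl e) :=
    ⟨_, horient ⟨s(u, v), G.mem_edgeSet.2 huv⟩⟩
  rcases Sym2.eq_iff.1 he with ⟨hu, hv⟩ | ⟨hu, hv⟩
  · rw [hu, hv]; exact hf e
  · rw [hu, hv]; exact (hf e).symm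

end SimpleGraph

theorem box_feasible_pressures_on_tree_general
    {V : Type*} (G : SimpleGraph V) (hG : G.IsTree)
    (hd tl : G.edgeSet → V)
    (horient : ∀ e : G.edgeSet, (e : Sym2 V) = s(hd e, tl e))
    (θ : G.edgeSet → ℝ) (ψ0 : V → ℝ)
    (hψ0 : ∀ e : G.edgeSet, ψ0 (hd e) - ψ0 (tl e) = θ e)
    (lb ub : V → ℝ) :
    (∃ ψ : V → ℝ, (∀ v : V, lb v ≤ ψ v ∧ ψ v ≤ ub v) ∧
        ∀ e : G.edgeSet, ψ (hd e) - ψ (tl e) = θ e)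
      ↔ ∀ j k : V, ψ0 j - ψ0 k ≤ ub j - lb k := by
  constructor
  · rintro ⟨ψ, hbox, hψ⟩ j k
    have hedge : ∀ e, ψ (hd e) - ψ0 (hd e) = ψ (tl e) - ψ0 (tl e) := fun e => by
      linarith [hψ e, hψ0 e]
    have hshift : ψ j - ψ0 j = ψ k - ψ0 k :=
      hG.connected.preconnected.apply_eq_of_forall_adj
        (fun _ _ => G.apply_eq_of_adj_of_forall_edge (f := fun v => ψ v - ψ0 v) hd tl horient
          hedge) j k
    linarith [(hbox j).2, (hbox k).1]
  · intro h
    obtain ⟨c, hlb, hub⟩ := exists_forall_le_and_forall_ge_of_forall_le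
      (f := fun k => lb k - ψ0 k) (g := fun j => ub j - ψ0 j) fun k j => by linarith [h j k]
    refine ⟨fun v => ψ0 v + c, fun v => ⟨?_, ?_⟩, fun e => ?_⟩
    · linarith [hlb v]
    · linarith [hub v]
    · linarith [hψ0 e]

/-- Proposition 2 (existence of box-feasible pressures on a tree): let `G` be a finite
tree with a fixed orientation, `θ` edge data, and `ψ0` a particular solution of the
edge-difference system. Given bounds `lb ≤ ub` per vertex, a solution `ψ` of the system
with `lb v ≤ ψ v ≤ ub v` for all `v` exists iff
`ψ0 j - ψ0 k ≤ ub j - lb k` for all vertices `j, k`. -/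
theorem box_feasible_pressures_on_tree
    {V : Type*} [Fintype V] (G : SimpleGraph V) (hG : G.IsTree)
    (hd tl : G.edgeSet → V)
    (horient : ∀ e : G.edgeSet, (e : Sym2 V) = s(hd e, tl e))
    (θ : G.edgeSet → ℝ) (ψ0 : V → ℝ)
    (hψ0 : ∀ e : G.edgeSet, ψ0 (hd e) - ψ0 (tl e) = θ e)
    (lb ub : V → ℝ) :
    (∃ ψ : V → ℝ, (∀ v : V, lb v ≤ ψ v ∧ ψ v ≤ ub v) ∧
        ∀ e : G.edgeSet, ψ (hd e) - ψ (tl e) = θ e)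
      ↔ ∀ j k : V, ψ0 j - ψ0 k ≤ ub j - lb k :=
  box_feasible_pressures_on_tree_general G hG hd tl horient θ ψ0 hψ0 lb ub
end
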